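/- arXiv:2004.02971 — 3 statements merged into one kernel-verified Lean document; each statement's English description precedes it below -/
import Mathlib

section
/- The three matrices S_0 = [[1,0],[D_0,1]], S_{c_1} = [[1+c_1 D_1, -c_1^2 D_1],[D_1, 1-c_1 D_1]], S_{c_2} = [[1+c_2 D_2, -c_2^2 D_2],[D_2, 1-c_2 D_2]] satisfy S_{c_2} S_{c_1} S_0 = T, where T = [[1,1],[0,1]], if and only if D_0 = 1/(c_1(1-c_2)), D_1 = 1/(c_1(c_2-c_1)), D_2 = 1/((c_2-c_1)(1-c_2)), given real numbers 0 < c_1 < c_2 < 1. -/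
open Matrix

/-- The parabolic generators `S₀, S_{c₁}, S_{c₂}` of the stabilizers of the cusps
`0, c₁, c₂` satisfy `S_{c₂} S_{c₁} S₀ = T` iff the constants `D₀, D₁, D₂` take the
values computed in the paper. -/
theorem parabolic_product_eq_T_iff (c₁ c₂ D₀ D₁ D₂ : ℝ)
    (h₁ : 0 < c₁) (h₂ : c₁ < c₂) (h₃ : c₂ < 1) :
    (!![1 + c₂ * D₂, -c₂ ^ 2 * D₂; D₂, 1 - c₂ * D₂] *
        !![1 + c₁ * D₁, -c₁ ^ 2 * D₁; D₁, 1 - c₁ * D₁] *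
        !![(1 : ℝ), 0; D₀, 1] = !![1, 1; 0, 1]) ↔
      (D₀ = 1 / (c₁ * (1 - c₂)) ∧ D₁ = 1 / (c₁ * (c₂ - c₁)) ∧
        D₂ = 1 / ((c₂ - c₁) * (1 - c₂))) := by
  have hc1 : c₁ ≠ 0 := h₁.ne'
  have hc21 : c₂ - c₁ ≠ 0 := sub_ne_zero.mpr h₂.ne'
  have hc2 : (1 : ℝ) - c₂ ≠ 0 := sub_ne_zero.mpr h₃.ne'
  simp only [Matrix.mul_fin_two, ← Matrix.ext_iff, Fin.forall_fin_two, Matrix.of_apply,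
    Matrix.cons_val', Matrix.cons_val_zero, Matrix.cons_val_one, Matrix.head_cons,
    Matrix.empty_val', Matrix.cons_val_fin_one, Matrix.head_fin_const]
  constructor
  · rintro ⟨⟨e1, e2⟩, e3, e4⟩
    have hD1 : D₁ = 1 / (c₁ * (c₂ - c₁)) := by
      field_simp
      linear_combination e2 - c₂ * e4
    have p1 : c₁ * D₁ * (c₂ - c₁) = 1 := by
      rw [hD1]; field_simp
    have hD2 : D₂ = 1 / ((c₂ - c₁) * (1 - c₂)) := by
      field_simp
      linear_combination (c₂ - c₁) * e4 + (1 - D₂ * (c₂ - c₁)) * p1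
    have p2 : D₂ * ((c₂ - c₁) * (1 - c₂)) = 1 := by
      rw [hD2]; field_simp
    have key : D₀ * (c₁ * (1 - c₂)) * (c₂ - c₁) = 1 * (c₂ - c₁) := by
      linear_combination c₁ * (1 - c₂) * (c₂ - c₁) * e3 - D₀ * c₁ * (1 - c₂) * (c₂ - c₁) * e4 +
        c₁ * D₁ * (c₂ - c₁) * p2 + c₂ * p1 - c₁ * p2
    have hD0 : D₀ = 1 / (c₁ * (1 - c₂)) := by
      field_simp
      linear_combination mul_right_cancel₀ hc21 key
    exact ⟨hD0, hD1, hD2⟩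
  · rintro ⟨h0, h1', h2'⟩
    subst h0 h1' h2'
    refine ⟨⟨?_, ?_⟩, ?_, ?_⟩ <;> field_simp <;> ring
end

section
/- With the Rankin-Cohen first bracket [f,g]_1 = k f Dg - l (Df) g for holomorphic f, g : ℍ → ℂ of weights k, l (where the bracket of two functions of weights a, b is taken with those weights, and [f,g]_1 has weight k+l+2), the Jacobi-type identity [[f,g]_1, h]_1 + [[g,h]_1, f]_1 + [[h,f]_1, g]_1 = 0 holds for holomorphic functions f, g, h of weights k, l, m. -/
open Complex

theorem deriv_rc1_aux (a b : ℝ) (u v : ℂ → ℂ) (z : ℂ)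
    (hu : DifferentiableAt ℂ u z) (hv : DifferentiableAt ℂ v z)
    (hu' : DifferentiableAt ℂ (deriv u) z) (hv' : DifferentiableAt ℂ (deriv v) z) :
    deriv (fun w => (a : ℂ) * u w * ((2 * Real.pi * Complex.I)⁻¹ * deriv v w) -
        (b : ℂ) * ((2 * Real.pi * Complex.I)⁻¹ * deriv u w) * v w) z =
      (a : ℂ) * deriv u z * ((2 * Real.pi * Complex.I)⁻¹ * deriv v z) +
        (a : ℂ) * u z * ((2 * Real.pi * Complex.I)⁻¹ * deriv (deriv v) z) -
        ((b : ℂ) * ((2 * Real.pi * Complex.I)⁻¹ * deriv (deriv u) z) * v z +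
          (b : ℂ) * ((2 * Real.pi * Complex.I)⁻¹ * deriv u z) * deriv v z) := by
  have h1 : HasDerivAt (fun w => (a : ℂ) * u w * ((2 * Real.pi * Complex.I)⁻¹ * deriv v w))
      ((a : ℂ) * deriv u z * ((2 * Real.pi * Complex.I)⁻¹ * deriv v z) +
        (a : ℂ) * u z * ((2 * Real.pi * Complex.I)⁻¹ * deriv (deriv v) z)) z :=
    (hu.hasDerivAt.const_mul (a : ℂ)).mul (hv'.hasDerivAt.const_mul _)
  have h2 : HasDerivAt (fun w => (b : ℂ) * ((2 * Real.pi * Complex.I)⁻¹ * deriv u w) * v w)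
      ((b : ℂ) * ((2 * Real.pi * Complex.I)⁻¹ * deriv (deriv u) z) * v z +
        (b : ℂ) * ((2 * Real.pi * Complex.I)⁻¹ * deriv u z) * deriv v z) z :=
    ((hu'.hasDerivAt.const_mul _).const_mul (b : ℂ)).mul hv.hasDerivAt
  exact (h1.sub h2).deriv

/-- The normalized derivative `D = (2πi)⁻¹ d/dτ`. -/
noncomputable def Dop (f : ℂ → ℂ) : ℂ → ℂ :=
  fun z => (2 * Real.pi * Complex.I)⁻¹ * deriv f z

/-- The first Rankin-Cohen bracket `[u,v]₁ = a u Dv - b (Du) v` of functions of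
weights `a` and `b`; it has weight `a + b + 2`. -/
noncomputable def RC1 (a b : ℝ) (u v : ℂ → ℂ) : ℂ → ℂ :=
  fun z => (a : ℂ) * u z * Dop v z - (b : ℂ) * Dop u z * v z

/-- Jacobi identity for the first Rankin-Cohen bracket: for holomorphic
`f, g, h` on the upper half-plane of weights `k, l, m`, iterated brackets (with
`[u,v]₁` assigned weight `a+b+2`) satisfy
`[[f,g]₁,h]₁ + [[g,h]₁,f]₁ + [[h,f]₁,g]₁ = 0`. -/
theorem rc_jacobi_identity (k l m : ℝ) (f g h : ℂ → ℂ)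
    (hf : ∀ z : ℂ, 0 < z.im → DifferentiableAt ℂ f z)
    (hg : ∀ z : ℂ, 0 < z.im → DifferentiableAt ℂ g z)
    (hh : ∀ z : ℂ, 0 < z.im → DifferentiableAt ℂ h z)
    (hf' : ∀ z : ℂ, 0 < z.im → DifferentiableAt ℂ (deriv f) z)
    (hg' : ∀ z : ℂ, 0 < z.im → DifferentiableAt ℂ (deriv g) z)
    (hh' : ∀ z : ℂ, 0 < z.im → DifferentiableAt ℂ (deriv h) z) :
    ∀ z : ℂ, 0 < z.im →
      RC1 (k + l + 2) m (RC1 k l f g) h z +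
        RC1 (l + m + 2) k (RC1 l m g h) f z +
        RC1 (m + k + 2) l (RC1 m k h f) g z = 0 := by
  intro z hz
  have e1 := deriv_rc1_aux k l f g z (hf z hz) (hg z hz) (hf' z hz) (hg' z hz)
  have e2 := deriv_rc1_aux l m g h z (hg z hz) (hh z hz) (hg' z hz) (hh' z hz)
  have e3 := deriv_rc1_aux m k h f z (hh z hz) (hf z hz) (hh' z hz) (hf' z hz)
  have hRC : ∀ (a b : ℝ) (u v : ℂ → ℂ), RC1 a b u v =
      fun w => (a : ℂ) * u w * ((2 * Real.pi * Complex.I)⁻¹ * deriv v w) -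
        (b : ℂ) * ((2 * Real.pi * Complex.I)⁻¹ * deriv u w) * v w := fun a b u v => rfl
  simp only [hRC]
  rw [e1, e2, e3]
  push_cast
  ring
end

section
/- Let ρ_F : ℂ \ {0,1} → ℂ satisfy the functional equation ρ_F(1-z) = (z ρ_F(z) - 1)/(z-1) for all z ≠ 0, 1. Suppose near z_0 = 1/2 the function has a convergent real-analytic expansion ρ_F(1/2 + z) = ∑_{i,j≥0} a_{i,j} z^i z̄^j. Then the functional equation implies ∑_{i,j≥0} a_{i,j}[1+(-1)^{i+j}] z^i z̄^j + 2∑_{i,j≥0} a_{i,j}[1-(-1)^{i+j}] z^{i+1} z̄^j - 2 = 0, and consequently a_{0,2n} = 0 for all n ≥ 1, and a_{i+1,j} = -2 a_{i,j} whenever i+j is odd. -/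
/-!
Put `f(z) = ρ_F(1/2 + z)`. At `1/2 + z` the functional equation reads
`f(z) + f(-z) + 2z (f(z) - f(-z)) = 2` for `z ≠ ±1/2`, and the left side minus `2` is again an
expansion in `zⁱ z̄ʲ` whose coefficients are explicit linear combinations of the `a_{i,j}`.
Such an expansion that sums to `0` near the origin has zero coefficients: on a ray `z = t u` it is
a power series in the real variable `t`, so its homogeneous parts vanish, and on the unit circle,
where `ū = u⁻¹`, those are polynomials in `u` with infinitely many zeros. Reading off the
coefficients of `z⁰ z̄²ⁿ` and `zⁱ⁺¹ z̄ʲ` gives the relations. The vanishing of all coefficients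
also gives the identity on the whole disc of convergence, including at `z = ±1/2`, where the
functional equation says nothing.
-/

open Complex ComplexConjugate Finset

theorem HasSum.sum_antidiagonal {M A : Type*} [AddCommMonoid M] [TopologicalSpace M] [T3Space M]
    [ContinuousAdd M] [AddMonoid A] [HasAntidiagonal A] {f : A × A → M} {s : M}
    (hf : HasSum f s) : HasSum (fun n => ∑ p ∈ antidiagonal n, f p) s := by
  refine (HasAntidiagonal.sigmaAntidiagonalEquivProd.hasSum_iff.mpr hf).sigma fun n => ?_
  simpa [sum_attach] using hasSum_fintype (fun q : antidiagonal n => f q.val)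

theorem eq_zero_of_hasSum_smul_pow {𝕜 E : Type*} [NontriviallyNormedField 𝕜]
    [NormedAddCommGroup E] [NormedSpace 𝕜 E] {c : ℕ → E} {δ : ℝ} (hδ : 0 < δ)
    (h : ∀ t : 𝕜, ‖t‖ < δ → HasSum (fun n => t ^ n • c n) 0) : c = 0 := by
  let p : FormalMultilinearSeries 𝕜 𝕜 E := fun n =>
    ContinuousMultilinearMap.mkPiRing 𝕜 (Fin n) (c n)
  have hp : ∀ t n, (p n fun _ => t) = t ^ n • c n := by simp [p]
  obtain ⟨ρ, hρ0, hρδ⟩ := NormedField.exists_norm_lt 𝕜 hδ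
  have hrad : (‖ρ‖₊ : ENNReal) ≤ p.radius := by
    refine p.le_radius_of_tendsto (l := 0) ?_
    simpa [p, norm_smul, mul_comm] using (h ρ hρδ).summable.tendsto_atTop_zero.norm
  have hball : HasFPowerSeriesOnBall 0 p 0 ‖ρ‖₊ := by
    refine ⟨hrad, by simpa using hρ0, fun {t} ht => ?_⟩
    have ht' : ‖t‖ < δ := by
      rw [Metric.mem_eball, edist_zero_right, enorm_eq_nnnorm, ENNReal.coe_lt_coe] at ht
      exact lt_trans (by exact_mod_cast ht) hρδ
    simpa [hp] using h t ht'
  funext n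
  simpa [hp] using congrArg (fun q : FormalMultilinearSeries 𝕜 𝕜 E => q n fun _ => 1)
    hball.hasFPowerSeriesAt.eq_zero

theorem Complex.sphere_zero_one_infinite : (Metric.sphere (0 : ℂ) 1).Infinite := by
  refine (isPreconnected_sphere (by simp) 0 1).infinite_of_nontrivial ⟨1, ?_, -1, ?_, ?_⟩ <;>
    norm_num

def conjMonomial (z : ℂ) (p : ℕ × ℕ) : ℂ := z ^ p.1 * conj z ^ p.2

theorem conjMonomial_ofReal_mul (t : ℝ) (u : ℂ) (p : ℕ × ℕ) :
    conjMonomial (t * u) p = (t : ℂ) ^ (p.1 + p.2) * conjMonomial u p := by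
  simp only [conjMonomial, map_mul, conj_ofReal]
  ring

theorem conjMonomial_neg (z : ℂ) (p : ℕ × ℕ) :
    conjMonomial (-z) p = (-1) ^ (p.1 + p.2) * conjMonomial z p := by
  simp only [conjMonomial, map_neg, neg_pow z, neg_pow (conj z)]
  ring

theorem pow_mul_conjMonomial_of_norm_eq_one {u : ℂ} (hu : ‖u‖ = 1) {n : ℕ} {p : ℕ × ℕ}
    (hp : p ∈ antidiagonal n) : u ^ n * conjMonomial u p = u ^ (2 * p.1) := by
  have hu0 : u ≠ 0 := by rintro rfl; simp at hu
  rw [HasAntidiagonal.mem_antidiagonal] at hp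
  rw [conjMonomial, ← inv_eq_conj hu, ← hp, inv_pow]
  field_simp
  ring

theorem eq_zero_of_sum_antidiagonal_conjMonomial_eq_zero {b : ℕ × ℕ → ℂ} {n : ℕ}
    (h : ∀ u : ℂ, ‖u‖ = 1 → ∑ p ∈ antidiagonal n, b p * conjMonomial u p = 0) :
    ∀ p ∈ antidiagonal n, b p = 0 := by
  open Polynomial in
  let Q : ℂ[X] := ∑ p ∈ antidiagonal n, C (b p) * X ^ (2 * p.1)
  have hroot : Metric.sphere (0 : ℂ) 1 ⊆ {u | Q.IsRoot u} := fun u hu => by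
    rw [mem_sphere_zero_iff_norm] at hu
    have : Q.eval u = u ^ n * ∑ p ∈ antidiagonal n, b p * conjMonomial u p := by
      simp only [Q, eval_finsetSum, eval_mul, eval_C, eval_pow, eval_X, mul_sum]
      exact sum_congr rfl fun p hp => by rw [← pow_mul_conjMonomial_of_norm_eq_one hu hp]; ring
    simp [IsRoot, this, h u hu]
  have hQ : Q = 0 := eq_zero_of_infinite_isRoot Q (sphere_zero_one_infinite.mono hroot)
  intro p hp
  have hcoeff : Q.coeff (2 * p.1) = b p := by
    rw [finsetSum_coeff, sum_eq_single p]
    · simp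
    · intro q hq hqp
      have : 2 * p.1 ≠ 2 * q.1 := fun h => hqp (by
        rw [HasAntidiagonal.mem_antidiagonal] at hp hq; ext <;> omega)
      simp [this]
    · exact fun h => (h hp).elim
  rw [← hcoeff, hQ, coeff_zero]

theorem eq_zero_of_hasSum_conjMonomial {b : ℕ × ℕ → ℂ} {δ : ℝ} (hδ : 0 < δ)
    (h : ∀ z : ℂ, ‖z‖ < δ → HasSum (fun p => b p * conjMonomial z p) 0) : b = 0 := by
  have hcircle : ∀ n, ∀ u : ℂ, ‖u‖ = 1 → ∑ p ∈ antidiagonal n, b p * conjMonomial u p = 0 := by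
    intro n u hu
    refine congrFun (eq_zero_of_hasSum_smul_pow (𝕜 := ℝ)
      (c := fun m => ∑ p ∈ antidiagonal m, b p * conjMonomial u p) hδ fun t ht => ?_) n
    have hradial := (h (t * u) (by simpa [hu] using ht)).sum_antidiagonal
    refine hradial.congr_fun fun m => ?_
    rw [smul_sum]
    refine sum_congr rfl fun p hp => ?_
    rw [HasAntidiagonal.mem_antidiagonal] at hp
    rw [conjMonomial_ofReal_mul, hp, real_smul, ofReal_pow]
    ring
  funext p
  exact eq_zero_of_sum_antidiagonal_conjMonomial_eq_zero (hcircle (p.1 + p.2)) p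
    (HasAntidiagonal.mem_antidiagonal.mpr rfl)

def shiftFst {M : Type*} [Zero M] (b : ℕ × ℕ → M) : ℕ × ℕ → M
  | (0, _) => 0
  | (i + 1, j) => b (i, j)

theorem HasSum.shiftFst_mul_conjMonomial {b : ℕ × ℕ → ℂ} {z s : ℂ}
    (h : HasSum (fun p => b p * conjMonomial z p) s) :
    HasSum (fun p => shiftFst b p * conjMonomial z p) (z * s) := by
  have hinj : Function.Injective fun p : ℕ × ℕ => (p.1 + 1, p.2) := by
    intro p q hpq
    simp only [Prod.mk.injEq, add_left_inj] at hpq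
    exact Prod.ext hpq.1 hpq.2
  refine (hinj.hasSum_iff ?_).mp ?_
  · rintro ⟨_ | i, j⟩ hij
    · exact zero_mul _
    · exact (hij ⟨(i, j), rfl⟩).elim
  · refine (h.mul_left z).congr_fun fun p => ?_
    simp only [Function.comp_apply, shiftFst, conjMonomial, pow_succ]
    ring

section Symmetrization

variable {a : ℕ × ℕ → ℂ} {z s t : ℂ}

theorem hasSum_even_coeff_mul_conjMonomial (hs : HasSum (fun p => a p * conjMonomial z p) s)
    (ht : HasSum (fun p => a p * conjMonomial (-z) p) t) :
    HasSum (fun p => (1 + (-1) ^ (p.1 + p.2)) * a p * conjMonomial z p) (s + t) :=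
  (hs.add ht).congr_fun fun p => by rw [conjMonomial_neg]; ring

theorem hasSum_odd_coeff_mul_conjMonomial (hs : HasSum (fun p => a p * conjMonomial z p) s)
    (ht : HasSum (fun p => a p * conjMonomial (-z) p) t) :
    HasSum (fun p => (1 - (-1) ^ (p.1 + p.2)) * a p * conjMonomial z p) (s - t) :=
  (hs.sub ht).congr_fun fun p => by rw [conjMonomial_neg]; ring

theorem hasSum_symmetrized (hs : HasSum (fun p => a p * conjMonomial z p) s)
    (ht : HasSum (fun p => a p * conjMonomial (-z) p) t) :
    HasSum (fun p => (1 + (-1) ^ (p.1 + p.2)) * a p * conjMonomial z p +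
        2 * (1 - (-1) ^ (p.1 + p.2)) * a p * (z * conjMonomial z p))
      (s + t + 2 * z * (s - t)) :=
  ((hasSum_even_coeff_mul_conjMonomial hs ht).add
    ((hasSum_odd_coeff_mul_conjMonomial hs ht).mul_left (2 * z))).congr_fun fun p => by ring

def symmetryDefectCoeff (a : ℕ × ℕ → ℂ) (p : ℕ × ℕ) : ℂ :=
  (1 + (-1) ^ (p.1 + p.2)) * a p + 2 * shiftFst (fun q => (1 - (-1) ^ (q.1 + q.2)) * a q) p -
    (Pi.single 0 2 : ℕ × ℕ → ℂ) p

theorem hasSum_symmetryDefectCoeff_mul_conjMonomial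
    (hs : HasSum (fun p => a p * conjMonomial z p) s)
    (ht : HasSum (fun p => a p * conjMonomial (-z) p) t) :
    HasSum (fun p => symmetryDefectCoeff a p * conjMonomial z p)
      (s + t + 2 * z * (s - t) - 2) := by
  have hconst : HasSum (fun p => (Pi.single 0 2 : ℕ × ℕ → ℂ) p * conjMonomial z p) 2 := by
    have h := hasSum_single (f := fun p => (Pi.single 0 2 : ℕ × ℕ → ℂ) p * conjMonomial z p) 0
      fun p hp => by simp [hp]
    simpa [conjMonomial] using h
  have hshift := (hasSum_odd_coeff_mul_conjMonomial hs ht).shiftFst_mul_conjMonomial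
  have h := ((hasSum_even_coeff_mul_conjMonomial hs ht).add (hshift.mul_left 2)).sub hconst
  rw [show s + t + 2 * z * (s - t) - 2 = s + t + 2 * (z * (s - t)) - 2 by ring]
  exact h.congr_fun fun p => by simp only [symmetryDefectCoeff]; ring

end Symmetrization

theorem functional_equation_centered_at_half {ρ : ℂ → ℂ}
    (hfe : ∀ z : ℂ, z ≠ 0 → z ≠ 1 → ρ (1 - z) = (z * ρ z - 1) / (z - 1)) {z : ℂ}
    (h₁ : z ≠ 1 / 2) (h₂ : z ≠ -(1 / 2)) :
    ρ (1 / 2 + z) + ρ (1 / 2 + -z) + 2 * z * (ρ (1 / 2 + z) - ρ (1 / 2 + -z)) = 2 := by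
  have hne : (1 / 2 + z) - 1 ≠ 0 := fun h => h₁ (by linear_combination h)
  have h := hfe (1 / 2 + z) (fun h => h₂ (by linear_combination h))
    (fun h => h₁ (by linear_combination h))
  rw [show 1 - (1 / 2 + z) = 1 / 2 + -z by ring, eq_div_iff hne] at h
  linear_combination -2 * h

/-- Consequences of the symmetry `ρ_F(1-z) = (zρ_F(z)-1)/(z-1)` for the local
real-analytic expansion `ρ_F(1/2+z) = ∑_{i,j} a_{i,j} zⁱ z̄ʲ` around `z₀ = 1/2`:
the identity `∑ a_{i,j}[1+(-1)^{i+j}] zⁱ z̄ʲ + 2∑ a_{i,j}[1-(-1)^{i+j}] z^{i+1} z̄ʲ - 2 = 0`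
holds, and consequently `a_{0,2n} = 0` for `n ≥ 1` and `a_{i+1,j} = -2 a_{i,j}`
whenever `i+j` is odd. -/
theorem accessory_parameter_expansion_symmetry
    (ρF : ℂ → ℂ) (a : ℕ → ℕ → ℂ) (r : ℝ) (hr : 0 < r)
    (hfe : ∀ z : ℂ, z ≠ 0 → z ≠ 1 → ρF (1 - z) = (z * ρF z - 1) / (z - 1))
    (hexp : ∀ z : ℂ, ‖z‖ < r →
      HasSum (fun p : ℕ × ℕ => a p.1 p.2 * z ^ p.1 * (starRingEnd ℂ z) ^ p.2)
        (ρF (1 / 2 + z))) :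
    (∀ z : ℂ, ‖z‖ < r →
      HasSum (fun p : ℕ × ℕ =>
          a p.1 p.2 * (1 + (-1 : ℂ) ^ (p.1 + p.2)) * z ^ p.1 * (starRingEnd ℂ z) ^ p.2 +
            2 * a p.1 p.2 * (1 - (-1 : ℂ) ^ (p.1 + p.2)) * z ^ (p.1 + 1) *
              (starRingEnd ℂ z) ^ p.2) 2) ∧
    (∀ n : ℕ, 1 ≤ n → a 0 (2 * n) = 0) ∧
    (∀ i j : ℕ, Odd (i + j) → a (i + 1) j = -2 * a i j) := by
  set A : ℕ × ℕ → ℂ := fun p => a p.1 p.2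
  have hA : ∀ z : ℂ, ‖z‖ < r → HasSum (fun p => A p * conjMonomial z p) (ρF (1 / 2 + z)) :=
    fun z hz => (hexp z hz).congr_fun fun p => (mul_assoc _ _ _).symm
  have hA_neg : ∀ z : ℂ, ‖z‖ < r →
      HasSum (fun p => A p * conjMonomial (-z) p) (ρF (1 / 2 + -z)) :=
    fun z hz => hA (-z) (by rwa [norm_neg])
  have hdefect_zero : symmetryDefectCoeff A = 0 := by
    refine eq_zero_of_hasSum_conjMonomial (lt_min hr one_half_pos) fun z hz => ?_
    have hz_half : ‖z‖ < 1 / 2 := hz.trans_le (min_le_right _ _)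
    have hz_r : ‖z‖ < r := hz.trans_le (min_le_left _ _)
    convert hasSum_symmetryDefectCoeff_mul_conjMonomial (hA z hz_r) (hA_neg z hz_r)
    rw [functional_equation_centered_at_half hfe, sub_self] <;>
      rintro rfl <;> norm_num at hz_half
  refine ⟨fun z hz => ?_, fun n hn => ?_, fun i j hij => ?_⟩
  · have hdefect := hasSum_symmetryDefectCoeff_mul_conjMonomial (hA z hz) (hA_neg z hz)
    rw [hdefect_zero] at hdefect
    have hvalue := sub_eq_zero.mp (hdefect.unique (by simp))
    have hsymm := hasSum_symmetrized (hA z hz) (hA_neg z hz)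
    rw [hvalue] at hsymm
    exact hsymm.congr_fun fun p => by simp only [A, conjMonomial]; ring
  · have h := congrFun hdefect_zero (0, 2 * n)
    simpa [symmetryDefectCoeff, shiftFst, pow_mul, Pi.single_apply, Prod.ext_iff,
      Nat.one_le_iff_ne_zero.mp hn] using h
  · have heven : Even (i + 1 + j) := by rw [add_right_comm]; exact hij.add_one
    have h := congrFun hdefect_zero (i + 1, j)
    simp [symmetryDefectCoeff, shiftFst, A, hij.neg_one_pow, heven.neg_one_pow] at h
    linear_combination h / 2
end
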